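/- arXiv:2009.05490 — 3 statements merged into one kernel-verified Lean document; each statement's English description precedes it below -/
import Mathlib

section
/- Let n ≥ 1, let x̂, x_λ ∈ ℝⁿ with x̂ ≠ x_λ, set L = ‖x̂ − x_λ‖ and ℓ' = (x̂ − x_λ)/L, let t̂ ∈ ℝⁿ, and set t_λ = −(I − 2ℓ'ℓ'ᵀ)t̂. Define φ(σ) = x_λ + σℓ' + (t_λ − ℓ')K0(σ) + (t̂ − ℓ')K1(σ), where K0(σ) = σ − 2σ²/L + σ³/L² and K1(σ) = −σ²/L + σ³/L². Then φ(L/2) = (x_λ + x̂)/2 − (L/4)(I − ℓ'ℓ'ᵀ)t̂ and φ'(L/2) = ((3 − ⟨ℓ', t̂⟩)/2)ℓ'. -/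
open scoped RealInnerProductSpace

/-! The cubic Hermite basis functions satisfy `K₀(L/2) = L/8`, `K₁(L/2) = -L/8` and
`K₀'(L/2) = K₁'(L/2) = -1/4`, so at the midpoint the curve only sees `t_λ - t̂` and `t_λ + t̂`.
For the reflected tangent `t_λ = -(I - 2ℓ'ℓ'ᵀ)t̂` the sum `t_λ + t̂ = 2⟨ℓ', t̂⟩ℓ'` is parallel to the
chord, while `t_λ - t̂ = -2(I - ℓ'ℓ'ᵀ)t̂` is its component orthogonal to the chord. -/

noncomputable section

namespace CubicHermite

def basis₀ (L σ : ℝ) : ℝ := σ - 2 * σ ^ 2 / L + σ ^ 3 / L ^ 2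

def basis₁ (L σ : ℝ) : ℝ := -σ ^ 2 / L + σ ^ 3 / L ^ 2

variable {L : ℝ}

theorem basis₀_half (hL : L ≠ 0) : basis₀ L (L / 2) = L / 8 := by
  unfold basis₀; field_simp; ring

theorem basis₁_half (hL : L ≠ 0) : basis₁ L (L / 2) = -(L / 8) := by
  unfold basis₁; field_simp; ring

theorem hasDerivAt_basis₀ (σ : ℝ) :
    HasDerivAt (basis₀ L) (1 - 2 * (2 * σ) / L + 3 * σ ^ 2 / L ^ 2) σ :=
  (((hasDerivAt_id' σ).fun_sub (((hasDerivAt_pow 2 σ).const_mul 2).div_const L)).fun_add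
    ((hasDerivAt_pow 3 σ).div_const (L ^ 2))).congr_deriv (by norm_num)

theorem hasDerivAt_basis₁ (σ : ℝ) :
    HasDerivAt (basis₁ L) (-(2 * σ) / L + 3 * σ ^ 2 / L ^ 2) σ :=
  (((hasDerivAt_pow 2 σ).fun_neg.div_const L).fun_add
    ((hasDerivAt_pow 3 σ).div_const (L ^ 2))).congr_deriv (by norm_num)

theorem hasDerivAt_basis₀_half (hL : L ≠ 0) : HasDerivAt (basis₀ L) (-(1 / 4)) (L / 2) :=
  (hasDerivAt_basis₀ (L / 2)).congr_deriv (by field_simp; ring)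

theorem hasDerivAt_basis₁_half (hL : L ≠ 0) : HasDerivAt (basis₁ L) (-(1 / 4)) (L / 2) :=
  (hasDerivAt_basis₁ (L / 2)).congr_deriv (by field_simp; ring)

variable {E : Type*} [NormedAddCommGroup E] [NormedSpace ℝ E]

/-- The straight segment `x₀ + σ ℓ` perturbed so that its tangents at `σ = 0` and `σ = L`
become `t₀` and `t₁`. -/
def curve (L : ℝ) (x₀ ℓ t₀ t₁ : E) (σ : ℝ) : E :=
  x₀ + σ • ℓ + basis₀ L σ • (t₀ - ℓ) + basis₁ L σ • (t₁ - ℓ)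

variable (x₀ ℓ t₀ t₁ : E)

theorem curve_half (hL : L ≠ 0) :
    curve L x₀ ℓ t₀ t₁ (L / 2) = x₀ + (L / 2) • ℓ + (L / 8) • (t₀ - t₁) := by
  rw [curve, basis₀_half hL, basis₁_half hL]
  module

theorem hasDerivAt_curve_half (hL : L ≠ 0) :
    HasDerivAt (curve L x₀ ℓ t₀ t₁) ((3 / 2 : ℝ) • ℓ - (1 / 4 : ℝ) • (t₀ + t₁)) (L / 2) :=
  ((((hasDerivAt_const (L / 2) x₀).fun_add ((hasDerivAt_id' (L / 2)).smul_const ℓ)).fun_add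
    ((hasDerivAt_basis₀_half hL).smul_const (t₀ - ℓ))).fun_add
    ((hasDerivAt_basis₁_half hL).smul_const (t₁ - ℓ))).congr_deriv (by module)

end CubicHermite

end

open CubicHermite in
theorem stmt_5_general (n : ℕ)
    (xhat xlam that : EuclideanSpace ℝ (Fin n)) (hne : xhat ≠ xlam)
    (L : ℝ) (hL : L = ‖xhat - xlam‖)
    (l' : EuclideanSpace ℝ (Fin n)) (hl' : l' = L⁻¹ • (xhat - xlam))
    (tlam : EuclideanSpace ℝ (Fin n))
    (htlam : tlam = -(that - (2 * ⟪l', that⟫) • l'))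
    (φ : ℝ → EuclideanSpace ℝ (Fin n))
    (hφ : ∀ σ : ℝ, φ σ = xlam + σ • l'
        + (σ - 2 * σ ^ 2 / L + σ ^ 3 / L ^ 2) • (tlam - l')
        + (-σ ^ 2 / L + σ ^ 3 / L ^ 2) • (that - l')) :
    φ (L / 2) = (1 / 2 : ℝ) • (xlam + xhat) - (L / 4) • (that - ⟪l', that⟫ • l') ∧
      deriv φ (L / 2) = ((3 - ⟪l', that⟫) / 2) • l' := by
  have hL0 : L ≠ 0 := hL ▸ norm_ne_zero_iff.mpr (sub_ne_zero_of_ne hne)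
  have hchord : (L / 2) • l' = (1 / 2 : ℝ) • (xhat - xlam) := by
    rw [hl', smul_smul]
    field_simp
  obtain rfl : φ = curve L xlam l' tlam that := funext hφ
  constructor
  · rw [curve_half _ _ _ _ hL0, hchord, htlam]
    module
  · rw [(hasDerivAt_curve_half _ _ _ _ hL0).deriv, htlam]
    module

/-- For the cubic Hermite curve `φ` with `t_λ = -(I - 2ℓ'ℓ'ᵀ)t̂`, the midpoint
value and derivative are `φ(L/2) = (x_λ + x̂)/2 - (L/4)(I - ℓ'ℓ'ᵀ)t̂` and
`φ'(L/2) = ((3 - ⟨ℓ', t̂⟩)/2)ℓ'`. -/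
theorem stmt_5 (n : ℕ) (hn : 1 ≤ n)
    (xhat xlam that : EuclideanSpace ℝ (Fin n)) (hne : xhat ≠ xlam)
    (L : ℝ) (hL : L = ‖xhat - xlam‖)
    (l' : EuclideanSpace ℝ (Fin n)) (hl' : l' = L⁻¹ • (xhat - xlam))
    (tlam : EuclideanSpace ℝ (Fin n))
    (htlam : tlam = -(that - (2 * ⟪l', that⟫) • l'))
    (φ : ℝ → EuclideanSpace ℝ (Fin n))
    (hφ : ∀ σ : ℝ, φ σ = xlam + σ • l'
        + (σ - 2 * σ ^ 2 / L + σ ^ 3 / L ^ 2) • (tlam - l')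
        + (-σ ^ 2 / L + σ ^ 3 / L ^ 2) • (that - l')) :
    φ (L / 2) = (1 / 2 : ℝ) • (xlam + xhat) - (L / 4) • (that - ⟪l', that⟫ • l') ∧
      deriv φ (L / 2) = ((3 - ⟪l', that⟫) / 2) • l' :=
  stmt_5_general n xhat xlam that hne L hL l' hl' tlam htlam φ hφ
end

section
/- Let f, F : [0, 1] → ℝ be differentiable, with F twice differentiable, and suppose there exist constants m > 0 and δ ≥ 0 such that F''(λ) ≥ m for all λ ∈ [0, 1] and |f'(λ) − F'(λ)| ≤ δ for all λ ∈ [0, 1]. Let λ_f, λ_F ∈ (0, 1) satisfy f'(λ_f) = 0 and F'(λ_F) = 0. Then |λ_f − λ_F| ≤ δ/m. -/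
open Set

theorem Convex.mul_abs_sub_le_abs_image_sub {D : Set ℝ} (hD : Convex ℝ D) {g g' : ℝ → ℝ} {m : ℝ}
    (hg : ∀ x ∈ D, HasDerivWithinAt g (g' x) D x) (hm : ∀ x ∈ interior D, m ≤ g' x)
    {x y : ℝ} (hx : x ∈ D) (hy : y ∈ D) : m * |y - x| ≤ |g y - g x| := by
  have hderiv : ∀ z ∈ interior D, HasDerivAt g (g' z) z := fun z hz =>
    (hg z (interior_subset hz)).hasDerivAt (mem_interior_iff_mem_nhds.mp hz)
  have hgrowth := hD.mul_sub_le_image_sub_of_le_deriv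
    (fun z hz => (hg z hz).continuousWithinAt)
    (fun z hz => (hderiv z hz).differentiableAt.differentiableWithinAt)
    (fun z hz => (hderiv z hz).deriv ▸ hm z hz)
  rcases le_total x y with hxy | hyx
  · rw [abs_of_nonneg (sub_nonneg.mpr hxy)]
    exact (hgrowth x hx y hy hxy).trans (le_abs_self _)
  · rw [abs_sub_comm, abs_sub_comm (g y), abs_of_nonneg (sub_nonneg.mpr hyx)]
    exact (hgrowth y hy x hx hyx).trans (le_abs_self _)

theorem stmt_14_general (f' F' F'' : ℝ → ℝ) (m δ : ℝ) (hm : 0 < m)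
    (hF' : ∀ lam ∈ Set.Icc (0 : ℝ) 1, HasDerivWithinAt F' (F'' lam) (Set.Icc 0 1) lam)
    (hF'' : ∀ lam ∈ Set.Icc (0 : ℝ) 1, m ≤ F'' lam)
    (hclose : ∀ lam ∈ Set.Icc (0 : ℝ) 1, |f' lam - F' lam| ≤ δ)
    (lamf lamF : ℝ) (hlf : lamf ∈ Set.Ioo (0 : ℝ) 1) (hlF : lamF ∈ Set.Ioo (0 : ℝ) 1)
    (hcritf : f' lamf = 0) (hcritF : F' lamF = 0) :
    |lamf - lamF| ≤ δ / m := by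
  have hlf_mem := Ioo_subset_Icc_self hlf
  rw [le_div_iff₀' hm]
  calc m * |lamf - lamF|
      ≤ |F' lamf - F' lamF| := (convex_Icc 0 1).mul_abs_sub_le_abs_image_sub hF'
          (fun x hx => hF'' x (interior_subset hx)) (Ioo_subset_Icc_self hlF) hlf_mem
    _ = |f' lamf - F' lamf| := by rw [hcritF, hcritf, zero_sub, sub_zero, abs_neg]
    _ ≤ δ := hclose lamf hlf_mem

/-- Stability of interior critical points: if `F'' ≥ m > 0` on `[0, 1]` and
`|f' − F'| ≤ δ` on `[0, 1]`, then interior critical points `λ_f` of `f` and `λ_F` of `F`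
satisfy `|λ_f − λ_F| ≤ δ/m`. -/
theorem stmt_14 (f F f' F' F'' : ℝ → ℝ) (m δ : ℝ) (hm : 0 < m) (hδ : 0 ≤ δ)
    (hf : ∀ lam ∈ Set.Icc (0 : ℝ) 1, HasDerivWithinAt f (f' lam) (Set.Icc 0 1) lam)
    (hF : ∀ lam ∈ Set.Icc (0 : ℝ) 1, HasDerivWithinAt F (F' lam) (Set.Icc 0 1) lam)
    (hF' : ∀ lam ∈ Set.Icc (0 : ℝ) 1, HasDerivWithinAt F' (F'' lam) (Set.Icc 0 1) lam)
    (hF'' : ∀ lam ∈ Set.Icc (0 : ℝ) 1, m ≤ F'' lam)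
    (hclose : ∀ lam ∈ Set.Icc (0 : ℝ) 1, |f' lam - F' lam| ≤ δ)
    (lamf lamF : ℝ) (hlf : lamf ∈ Set.Ioo (0 : ℝ) 1) (hlF : lamF ∈ Set.Ioo (0 : ℝ) 1)
    (hcritf : f' lamf = 0) (hcritF : F' lamF = 0) :
    |lamf - lamF| ≤ δ / m :=
  stmt_14_general f' F' F'' m δ hm hF' hF'' hclose lamf lamF hlf hlF hcritf hcritF
end

section
/- Let n ≥ 1, let s₀ > 0 and v ∈ ℝⁿ with v ≠ 0, and define the slowness s(x) = (1/s₀ + ⟨v, x⟩)⁻¹ on the open set Ω = {x ∈ ℝⁿ : 1/s₀ + ⟨v, x⟩ > 0, x ≠ 0}. Define τ(x) = (1/‖v‖) log(u(x) + √(u(x)² − 1)), where u(x) = 1 + (1/2) s₀ s(x) ‖v‖² ‖x‖². Then τ is differentiable on Ω and ‖∇τ(x)‖ = s(x) for all x ∈ Ω. -/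
/-! With `a = 1/s₀ + ⟪v, x⟫`, the argument of `arcosh` is `u = 1 + (s₀‖v‖²/2) ‖x‖²/a`, whose
gradient is `(s₀‖v‖²/(2a²)) (2a x − ‖x‖² v)`. As `arcosh' u = 1/√(u² − 1)`, the eikonal equation
reduces to `‖∇u‖² = ‖v‖² (u² − 1)/a²`; using `⟪v, x⟫ = a − 1/s₀`, both sides equal
`s₀‖v‖⁴‖x‖² (4a + s₀‖v‖²‖x‖²)/(4a⁴)`. -/

open Real
open scoped RealInnerProductSpace

variable {E : Type*} [NormedAddCommGroup E] [InnerProductSpace ℝ E]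

theorem norm_sq_two_mul_smul_sub_norm_sq_smul (a : ℝ) (v x : E) :
    ‖(2 * a) • x - ‖x‖ ^ 2 • v‖ ^ 2 = 4 * a * ‖x‖ ^ 2 * (a - ⟪v, x⟫) + ‖x‖ ^ 4 * ‖v‖ ^ 2 := by
  rw [norm_sub_sq_real, norm_smul, norm_smul, real_inner_smul_left, real_inner_smul_right,
    real_inner_comm]
  simp only [Real.norm_eq_abs, mul_pow, sq_abs]
  ring

variable [CompleteSpace E]

theorem HasDerivAt.comp_hasGradientAt {f : E → ℝ} {g : ℝ → ℝ} {f' : E} {g' : ℝ} {x : E}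
    (hg : HasDerivAt g g' (f x)) (hf : HasGradientAt f f' x) :
    HasGradientAt (g ∘ f) (g' • f') x := by
  rw [hasGradientAt_iff_hasFDerivAt] at hf ⊢
  refine (hg.comp_hasFDerivAt x hf).congr_fderiv ?_
  ext y
  simp

theorem hasGradientAt_norm_sq_div_const_add_inner {c : ℝ} {v x : E} (hx : c + ⟪v, x⟫ ≠ 0) :
    HasGradientAt (fun y => ‖y‖ ^ 2 / (c + ⟪v, y⟫))
      ((c + ⟪v, x⟫)⁻¹ ^ 2 • ((2 * (c + ⟪v, x⟫)) • x - ‖x‖ ^ 2 • v)) x := by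
  have hℓ : HasFDerivAt (fun y => c + ⟪v, y⟫) (innerSL ℝ v) x :=
    (innerSL ℝ v).hasFDerivAt.const_add c
  have hq := (hasStrictFDerivAt_norm_sq x).hasFDerivAt.mul
    ((hasDerivAt_inv hx).comp_hasFDerivAt x hℓ)
  rw [hasGradientAt_iff_hasFDerivAt]
  refine hq.congr_fderiv ?_
  ext y
  simp only [neg_smul, smul_neg, Function.comp_apply, add_apply, neg_apply, smul_apply,
    coe_innerSL_apply, smul_eq_mul, nsmul_eq_mul, Nat.cast_ofNat, inv_pow, map_smul, map_sub,
    sub_apply, InnerProductSpace.toDual_apply_apply]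
  field_simp
  ring

noncomputable def linearSpeedTravelTime (s₀ : ℝ) (v y : E) : ℝ :=
  ‖v‖⁻¹ * arcosh (1 + s₀ * ‖v‖ ^ 2 / 2 * (‖y‖ ^ 2 / (1 / s₀ + ⟪v, y⟫)))

theorem linearSpeedTravelTime_eikonal {s₀ : ℝ} (hs₀ : 0 < s₀) {v x : E} (hv : v ≠ 0)
    (hx : x ≠ 0) (ha : 0 < 1 / s₀ + ⟪v, x⟫) :
    DifferentiableAt ℝ (linearSpeedTravelTime s₀ v) x ∧
      ‖gradient (linearSpeedTravelTime s₀ v) x‖ = (1 / s₀ + ⟪v, x⟫)⁻¹ := by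
  have hv_pos : 0 < ‖v‖ := norm_pos_iff.mpr hv
  have hx_pos : 0 < ‖x‖ := norm_pos_iff.mpr hx
  have hu : 1 < 1 + s₀ * ‖v‖ ^ 2 / 2 * (‖x‖ ^ 2 / (1 / s₀ + ⟪v, x⟫)) := by
    have : 0 < s₀ * ‖v‖ ^ 2 / 2 * (‖x‖ ^ 2 / (1 / s₀ + ⟪v, x⟫)) := by positivity
    linarith
  have harcosh := (((hasDerivAt_id' _).const_mul (s₀ * ‖v‖ ^ 2 / 2)).const_add 1
    |> (hasDerivAt_arcosh hu).comp (‖x‖ ^ 2 / (1 / s₀ + ⟪v, x⟫))).const_mul ‖v‖⁻¹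
  have hτ : HasGradientAt (linearSpeedTravelTime s₀ v) _ x :=
    harcosh.comp_hasGradientAt (f := fun y => ‖y‖ ^ 2 / (1 / s₀ + ⟪v, y⟫))
      (hasGradientAt_norm_sq_div_const_add_inner ha.ne')
  refine ⟨hτ.differentiableAt, ?_⟩
  rw [hτ.gradient, ← sq_eq_sq₀ (norm_nonneg _) (inv_nonneg.2 ha.le), norm_smul, norm_smul,
    mul_pow, mul_pow, norm_sq_two_mul_smul_sub_norm_sq_smul, Real.norm_eq_abs, Real.norm_eq_abs,
    sq_abs, sq_abs, mul_pow, mul_pow, inv_pow (√_), sq_sqrt (by nlinarith),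
    show 1 / s₀ + ⟪v, x⟫ - ⟪v, x⟫ = 1 / s₀ by ring]
  generalize 1 / s₀ + ⟪v, x⟫ = a at *
  have hu_sq_sub_one : (1 + s₀ * ‖v‖ ^ 2 / 2 * (‖x‖ ^ 2 / a)) ^ 2 - 1
      = s₀ * ‖v‖ ^ 2 * ‖x‖ ^ 2 * (4 * a + s₀ * ‖v‖ ^ 2 * ‖x‖ ^ 2) / (4 * a ^ 2) := by
    field_simp
    ring
  rw [hu_sq_sub_one]
  field_simp
  ring

theorem stmt_17_general (n : ℕ) (s₀ : ℝ) (hs₀ : 0 < s₀)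
    (v : EuclideanSpace ℝ (Fin n)) (hv : v ≠ 0)
    (Ω : Set (EuclideanSpace ℝ (Fin n)))
    (hΩ : Ω = {x | 0 < 1 / s₀ + ⟪v, x⟫ ∧ x ≠ 0})
    (s : EuclideanSpace ℝ (Fin n) → ℝ)
    (hs : ∀ x, s x = (1 / s₀ + ⟪v, x⟫)⁻¹)
    (u : EuclideanSpace ℝ (Fin n) → ℝ)
    (hu : ∀ x, u x = 1 + (1 / 2) * s₀ * s x * ‖v‖ ^ 2 * ‖x‖ ^ 2)
    (τ : EuclideanSpace ℝ (Fin n) → ℝ)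
    (hτ : ∀ x, τ x = (1 / ‖v‖) * Real.log (u x + Real.sqrt (u x ^ 2 - 1))) :
    ∀ x ∈ Ω, DifferentiableAt ℝ τ x ∧ ‖gradient τ x‖ = s x := by
  have hτ_eq : τ = linearSpeedTravelTime s₀ v := by
    funext y
    rw [hτ, hu, hs, linearSpeedTravelTime, arcosh, one_div ‖v‖]
    ring_nf
  subst hΩ
  rintro x ⟨hx_speed, hx_ne⟩
  rw [hτ_eq, hs]
  exact linearSpeedTravelTime_eikonal hs₀ hv hx_ne hx_speed

/-- For a linear speed of sound `1/s(x) = 1/s₀ + ⟨v, x⟩`, the function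
`τ(x) = (1/‖v‖) cosh⁻¹(1 + ½ s₀ s(x) ‖v‖² ‖x‖²)`, where
`cosh⁻¹(u) = log(u + √(u² − 1))`, is differentiable on
`Ω = {x : 1/s₀ + ⟨v, x⟩ > 0, x ≠ 0}` and solves the eikonal equation `‖∇τ(x)‖ = s(x)`. -/
theorem stmt_17 (n : ℕ) (hn : 1 ≤ n) (s₀ : ℝ) (hs₀ : 0 < s₀)
    (v : EuclideanSpace ℝ (Fin n)) (hv : v ≠ 0)
    (Ω : Set (EuclideanSpace ℝ (Fin n)))
    (hΩ : Ω = {x | 0 < 1 / s₀ + ⟪v, x⟫ ∧ x ≠ 0})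
    (s : EuclideanSpace ℝ (Fin n) → ℝ)
    (hs : ∀ x, s x = (1 / s₀ + ⟪v, x⟫)⁻¹)
    (u : EuclideanSpace ℝ (Fin n) → ℝ)
    (hu : ∀ x, u x = 1 + (1 / 2) * s₀ * s x * ‖v‖ ^ 2 * ‖x‖ ^ 2)
    (τ : EuclideanSpace ℝ (Fin n) → ℝ)
    (hτ : ∀ x, τ x = (1 / ‖v‖) * Real.log (u x + Real.sqrt (u x ^ 2 - 1))) :
    ∀ x ∈ Ω, DifferentiableAt ℝ τ x ∧ ‖gradient τ x‖ = s x :=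
  stmt_17_general n s₀ hs₀ v hv Ω hΩ s hs u hu τ hτ
end
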